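/- arXiv:2503.12523 — 2 statements merged into one kernel-verified Lean document; each statement's English description precedes it below -/
import Mathlib

section
/- Let (Z₁, Z₂, ⊥) be a polarity with Galois maps (·)′ and closure W″. Let F : 𝒫(Z₁) → 𝒫(Z₁) be any monotone map and let F̄ be the closure of its restriction to stable sets, F̄(A) = (F(A))″. If F is completely additive and every section of its Galois dual is stable (smoothness), then F̄ distributes over arbitrary joins in the lattice of stable sets: F̄(⋁ᵢ Aᵢ) = ⋁ᵢ F̄(Aᵢ), where ⋁ᵢ Aᵢ = (⋃ᵢ Aᵢ)″. In particular, for a smooth completely additive F, F̄((⋃ᵢ Aᵢ)″) = (⋃ᵢ F(Aᵢ))″ for any family of stable sets Aᵢ. -/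
/-!
Smoothness of `R` makes `y ∈ F(U)′` equivalent to `U` lying in the stable set `yR′`, a condition
that `U` satisfies exactly when its closure `U″` does. Hence `F(U″)′ = F(U)′`, i.e.
`F̄(U″) = F(U)″`, and the theorem follows from the complete additivity of the image operator `F`.
-/

def prime1 {Z₁ Z₂ : Type*} (perp : Z₁ → Z₂ → Prop) (U : Set Z₁) : Set Z₂ :=
  {y | ∀ x ∈ U, perp x y}

def prime2 {Z₁ Z₂ : Type*} (perp : Z₁ → Z₂ → Prop) (V : Set Z₂) : Set Z₁ :=
  {x | ∀ y ∈ V, perp x y}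

/-- Galois closure on subsets of `Z₁`. -/
def gcl {Z₁ Z₂ : Type*} (perp : Z₁ → Z₂ → Prop) (U : Set Z₁) : Set Z₁ :=
  prime2 perp (prime1 perp U)

/-- Image operator generated by `R ⊆ Z₁ × Z₁`: `F U = ⋃_{z ∈ U} Rz`. -/
def imF {Z₁ : Type*} (R : Z₁ → Z₁ → Prop) (U : Set Z₁) : Set Z₁ :=
  {x | ∃ z ∈ U, R x z}

open Order

namespace Polarity

variable {Z₁ Z₂ : Type*} {perp : Z₁ → Z₂ → Prop} {R : Z₁ → Z₁ → Prop}

/-- The section `yR′ = {z | y ∈ (Rz)′}` of the Galois dual `R′` of `R`. -/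
def dualSection (perp : Z₁ → Z₂ → Prop) (R : Z₁ → Z₁ → Prop) (y : Z₂) : Set Z₁ :=
  {z | y ∈ prime1 perp {x | R x z}}

theorem imF_iUnion {ι : Type*} (A : ι → Set Z₁) : imF R (⋃ i, A i) = ⋃ i, imF R (A i) := by
  ext x
  simp only [imF, Set.mem_iUnion, Set.mem_ofPred_eq]
  exact ⟨fun ⟨z, ⟨i, hz⟩, hxz⟩ => ⟨i, z, hz, hxz⟩, fun ⟨i, z, hz, hxz⟩ => ⟨z, ⟨i, hz⟩, hxz⟩⟩

theorem mem_prime1_imF_iff {U : Set Z₁} {y : Z₂} :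
    y ∈ prime1 perp (imF R U) ↔ U ⊆ dualSection perp R y :=
  ⟨fun hy _ hz x hxz => hy x ⟨_, hz, hxz⟩, fun hU _ ⟨_, hz, hxz⟩ => hU hz _ hxz⟩

theorem prime1_imF_gcl (hsmooth : ∀ y, IsExtent perp (dualSection perp R y)) (U : Set Z₁) :
    prime1 perp (imF R (gcl perp U)) = prime1 perp (imF R U) := by
  ext y
  rw [mem_prime1_imF_iff, mem_prime1_imF_iff]
  exact ⟨(subset_lowerPolar_upperPolar perp U).trans,
    (hsmooth y).lowerPolar_upperPolar_subset⟩

theorem gcl_imF_gcl (hsmooth : ∀ y, IsExtent perp (dualSection perp R y)) (U : Set Z₁) :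
    gcl perp (imF R (gcl perp U)) = gcl perp (imF R U) :=
  congrArg (prime2 perp) (prime1_imF_gcl hsmooth U)

end Polarity

theorem stmt15_general {Z₁ Z₂ : Type*} {ι : Type*} (perp : Z₁ → Z₂ → Prop)
    (R : Z₁ → Z₁ → Prop)
    -- smoothness: every section `yR′` of the Galois dual relation is stable
    (hsmooth : ∀ y : Z₂,
      gcl perp {z : Z₁ | y ∈ prime1 perp {x : Z₁ | R x z}}
        = {z : Z₁ | y ∈ prime1 perp {x : Z₁ | R x z}})
    (A : ι → Set Z₁) :
    gcl perp (imF R (gcl perp (⋃ i, A i))) = gcl perp (⋃ i, imF R (A i)) := by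
  rw [Polarity.gcl_imF_gcl (fun y => isExtent_iff.mpr (hsmooth y)), Polarity.imF_iUnion]

theorem stmt15 {Z₁ Z₂ : Type*} {ι : Type*} (perp : Z₁ → Z₂ → Prop)
    (R : Z₁ → Z₁ → Prop)
    -- smoothness: every section `yR′` of the Galois dual relation is stable
    (hsmooth : ∀ y : Z₂,
      gcl perp {z : Z₁ | y ∈ prime1 perp {x : Z₁ | R x z}}
        = {z : Z₁ | y ∈ prime1 perp {x : Z₁ | R x z}})
    (A : ι → Set Z₁) (hA : ∀ i, gcl perp (A i) = A i) :
    gcl perp (imF R (gcl perp (⋃ i, A i))) = gcl perp (⋃ i, imF R (A i)) :=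
  stmt15_general perp R hsmooth A
end

section
/- In a separated polarity (Z₁, Z₂, ⊥) (where u ⪯ w iff {u}′ ⊆ {w}′ is a partial order), let F : 𝒫(Z₁) → 𝒫(Z₁) be completely additive with residual G (F(U) ⊆ V iff U ⊆ G(V)), and suppose that the closure F̄ of the restriction of F to stable sets is completely join-preserving on stable sets. Then the residual Ḡ of F̄ on stable sets can be computed pointwise via principal closed elements: for stable sets P and Q, Ḡ(Q) = {u ∈ Z₁ | F̄(Γu) ⊆ Q}, where Γu = {u}″. -/
section Polarity

variable {Z₁ Z₂ : Type*} (perp : Z₁ → Z₂ → Prop)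

-- `gcl perp` is definitionally Mathlib's closure operator `extentClosure perp`.
theorem subset_gcl (U : Set Z₁) : U ⊆ gcl perp U :=
  (extentClosure perp).le_closure U

theorem gcl_mono : Monotone (gcl perp) :=
  (extentClosure perp).monotone

theorem gcl_gcl (U : Set Z₁) : gcl perp (gcl perp U) = gcl perp U :=
  (extentClosure perp).idempotent U

def ClosureMapPreservesJoins (F : Set Z₁ → Set Z₁) : Prop :=
  ∀ S : Set (Set Z₁), (∀ A ∈ S, gcl perp A = A) →
    gcl perp (F (gcl perp (⋃₀ S))) = gcl perp (⋃₀ {B | ∃ A ∈ S, B = F A})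

/-- `Ḡ Q` in the paper's notation. -/
def pointwiseResidual (F : Set Z₁ → Set Z₁) (Q : Set Z₁) : Set Z₁ :=
  {u | gcl perp (F (gcl perp {u})) ⊆ Q}

variable {perp}

theorem gcl_subset_of_subset {U V : Set Z₁} (hV : gcl perp V = V) (h : U ⊆ V) :
    gcl perp U ⊆ V :=
  hV ▸ gcl_mono perp h

theorem gcl_singleton_subset {A : Set Z₁} (hA : gcl perp A = A) {u : Z₁} (hu : u ∈ A) :
    gcl perp {u} ⊆ A :=
  gcl_subset_of_subset hA (Set.singleton_subset_iff.mpr hu)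

variable {F : Set Z₁ → Set Z₁}

theorem ClosureMapPreservesJoins.mono (hF : ClosureMapPreservesJoins perp F) {A B : Set Z₁}
    (hA : gcl perp A = A) (hB : gcl perp B = B) (hAB : A ⊆ B) :
    gcl perp (F A) ⊆ gcl perp (F B) := by
  have hjoin := hF {A, B} (by rintro C (rfl | rfl) <;> assumption)
  rw [Set.sUnion_pair, Set.union_eq_right.mpr hAB, hB] at hjoin
  rw [hjoin]
  exact gcl_mono perp fun x hx => ⟨F A, ⟨A, Or.inl rfl, rfl⟩, hx⟩

/-- Writing `A″` as the join of the `Γu`, `u ∈ A`, the join-preservation of `F̄` bounds `F̄(A″)`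
by the `F̄(Γu)`. -/
theorem ClosureMapPreservesJoins.gcl_map_gcl_subset (hF : ClosureMapPreservesJoins perp F)
    {Q : Set Z₁} (hQ : gcl perp Q = Q) {A : Set Z₁} (hA : A ⊆ pointwiseResidual perp F Q) :
    gcl perp (F (gcl perp A)) ⊆ Q := by
  let Γ : Z₁ → Set Z₁ := fun u => gcl perp {u}
  have hjoin := hF (Γ '' A) (by rintro _ ⟨u, -, rfl⟩; exact gcl_gcl perp {u})
  have hcover : gcl perp (⋃₀ (Γ '' A)) = gcl perp A := by
    refine (gcl_subset_of_subset (gcl_gcl perp A) ?_).antisymm (gcl_mono perp ?_)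
    · rintro x ⟨_, ⟨u, hu, rfl⟩, hx⟩
      exact gcl_mono perp (Set.singleton_subset_iff.mpr hu) hx
    · exact fun u hu => ⟨Γ u, ⟨u, hu, rfl⟩, subset_gcl perp {u} rfl⟩
  rw [hcover] at hjoin
  rw [hjoin]
  refine gcl_subset_of_subset hQ ?_
  rintro x ⟨_, ⟨_, ⟨u, hu, rfl⟩, rfl⟩, hx⟩
  exact hA hu (subset_gcl perp _ hx)

theorem ClosureMapPreservesJoins.gcl_pointwiseResidual (hF : ClosureMapPreservesJoins perp F)
    {Q : Set Z₁} (hQ : gcl perp Q = Q) :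
    gcl perp (pointwiseResidual perp F Q) = pointwiseResidual perp F Q := by
  refine Set.Subset.antisymm (fun u hu => ?_) (subset_gcl perp _)
  have hΓu : gcl perp {u} ⊆ gcl perp (pointwiseResidual perp F Q) :=
    gcl_singleton_subset (gcl_gcl perp _) hu
  exact (hF.mono (gcl_gcl perp _) (gcl_gcl perp _) hΓu).trans
    (hF.gcl_map_gcl_subset hQ subset_rfl)

theorem ClosureMapPreservesJoins.gcl_map_subset_iff (hF : ClosureMapPreservesJoins perp F)
    {Q : Set Z₁} (hQ : gcl perp Q = Q) {A : Set Z₁} (hA : gcl perp A = A) :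
    gcl perp (F A) ⊆ Q ↔ A ⊆ pointwiseResidual perp F Q := by
  refine ⟨fun h u hu => ?_, fun h => hA ▸ hF.gcl_map_gcl_subset hQ h⟩
  exact (hF.mono (gcl_gcl perp _) hA (gcl_singleton_subset hA hu)).trans h

end Polarity

theorem stmt16_general {Z₁ Z₂ : Type*} (perp : Z₁ → Z₂ → Prop)
    (F : Set Z₁ → Set Z₁)
    -- the closure F̄ of the restriction of F to stable sets preserves joins
    (hJoin : ∀ S : Set (Set Z₁), (∀ A ∈ S, gcl perp A = A) →
      gcl perp (F (gcl perp (⋃₀ S))) = gcl perp (⋃₀ {B | ∃ A ∈ S, B = F A})) :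
    ∀ Q : Set Z₁, gcl perp Q = Q →
      -- the claimed residual is a stable set ...
      gcl perp {u : Z₁ | gcl perp (F (gcl perp {u})) ⊆ Q}
        = {u : Z₁ | gcl perp (F (gcl perp {u})) ⊆ Q} ∧
      -- ... and it is the right adjoint of F̄ on stable sets
      (∀ A : Set Z₁, gcl perp A = A →
        (gcl perp (F A) ⊆ Q ↔ A ⊆ {u : Z₁ | gcl perp (F (gcl perp {u})) ⊆ Q})) := by
  have hF : ClosureMapPreservesJoins perp F := hJoin
  exact fun Q hQ => ⟨hF.gcl_pointwiseResidual hQ, fun A hA => hF.gcl_map_subset_iff hQ hA⟩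

theorem stmt16 {Z₁ Z₂ : Type*} (perp : Z₁ → Z₂ → Prop)
    (F : Set Z₁ → Set Z₁)
    -- separation: ⪯ is a partial order, i.e. antisymmetric
    (hsep : ∀ u w : Z₁, prime1 perp {u} = prime1 perp {w} → u = w)
    -- complete additivity of F
    (hAdd : ∀ S : Set (Set Z₁), F (⋃₀ S) = ⋃₀ (F '' S))
    -- the closure F̄ of the restriction of F to stable sets preserves joins
    (hJoin : ∀ S : Set (Set Z₁), (∀ A ∈ S, gcl perp A = A) →
      gcl perp (F (gcl perp (⋃₀ S))) = gcl perp (⋃₀ {B | ∃ A ∈ S, B = F A})) :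
    ∀ Q : Set Z₁, gcl perp Q = Q →
      -- the claimed residual is a stable set ...
      gcl perp {u : Z₁ | gcl perp (F (gcl perp {u})) ⊆ Q}
        = {u : Z₁ | gcl perp (F (gcl perp {u})) ⊆ Q} ∧
      -- ... and it is the right adjoint of F̄ on stable sets
      (∀ A : Set Z₁, gcl perp A = A →
        (gcl perp (F A) ⊆ Q ↔ A ⊆ {u : Z₁ | gcl perp (F (gcl perp {u})) ⊆ Q})) :=
  stmt16_general perp F hJoin
end
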